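/- In the guarded lambda calculus's denotational model, the fixed-point combinator satisfies: for every object A of the topos of trees and every morphism f : ▶A → A, there exists a unique global element a : 1 → A such that f ∘ next ∘ a = a. -/

import Mathlib

open CategoryTheory

structure TObj : Type 1 where
  X : ℕ → Type
  res : ∀ n, X (n+1) → X n

@[ext]
structure THom (A B : TObj) : Type where
  app : ∀ n, A.X n → B.X n
  nat : ∀ n (x : A.X (n+1)), app n (A.res n x) = B.res n (app (n+1) x)

instance : Category TObj where
  Hom := THom
  id A := ⟨fun _ x => x, fun _ _ => rfl⟩
  comp f g := ⟨fun n x => g.app n (f.app n x), fun n x => by rw [f.nat, g.nat]⟩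
  id_comp f := rfl
  comp_id f := rfl
  assoc f g h := rfl

def Delta (Z : Type) : TObj := ⟨fun _ => Z, fun _ z => z⟩

def LaterX (A : TObj) : ℕ → Type
  | 0 => PUnit
  | n+1 => A.X n

def LaterRes (A : TObj) : ∀ n, LaterX A (n+1) → LaterX A n
  | 0 => fun _ => PUnit.unit
  | n+1 => A.res n

def LaterObj (A : TObj) : TObj := ⟨LaterX A, LaterRes A⟩

def LaterMap {A B : TObj} (f : A ⟶ B) : LaterObj A ⟶ LaterObj B where
  app := fun n => match n with
    | 0 => fun _ => PUnit.unit
    | n+1 => f.app n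
  nat := fun n => match n with
    | 0 => fun _ => rfl
    | n+1 => fun x => f.nat n x

def nextT (A : TObj) : A ⟶ LaterObj A where
  app := fun n => match n with
    | 0 => fun _ => PUnit.unit
    | n+1 => A.res n
  nat := fun n => match n with
    | 0 => fun _ => rfl
    | n+1 => fun _ => rfl

def toUnitT (A : TObj) : A ⟶ Delta PUnit := ⟨fun _ _ => PUnit.unit, fun _ _ => rfl⟩

def OmegaObj : TObj where
  X := fun n => Fin (n+2)
  res := fun n k => ⟨min (n+1) k.val, by omega⟩

def trueT : Delta PUnit ⟶ OmegaObj where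
  app := fun n _ => ⟨n+1, by omega⟩
  nat := fun n _ => by
    apply Fin.ext
    show n+1 = min (n+1) (n+2)
    omega

def topT (X : TObj) : X ⟶ OmegaObj where
  app := fun n _ => ⟨n+1, by omega⟩
  nat := fun n _ => by
    apply Fin.ext
    show n+1 = min (n+1) (n+2)
    omega

def laterOmega : OmegaObj ⟶ OmegaObj where
  app := fun n k => ⟨min (n+1) (k.val+1), by omega⟩
  nat := fun n k => by
    apply Fin.ext
    show min (n+1) (min (n+1) k.val + 1) = min (n+1) (min (n+2) (k.val+1))
    omega

def nnOmega : OmegaObj ⟶ OmegaObj where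
  app := fun n k => ⟨if k.val = 0 then 0 else n+1, by split <;> omega⟩
  nat := fun n k => by
    apply Fin.ext
    show (if min (n+1) k.val = 0 then 0 else n+1) = min (n+1) (if k.val = 0 then 0 else n+2)
    rcases Nat.eq_zero_or_pos k.val with h | h
    · simp [h]
    · rw [if_neg (by omega), if_neg (by omega)]; omega

def ProdObj (A B : TObj) : TObj :=
  ⟨fun n => A.X n × B.X n, fun n p => (A.res n p.1, B.res n p.2)⟩

def proj1 (A B : TObj) : ProdObj A B ⟶ A := ⟨fun _ p => p.1, fun _ _ => rfl⟩
def proj2 (A B : TObj) : ProdObj A B ⟶ B := ⟨fun _ p => p.2, fun _ _ => rfl⟩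

def pairT {C A B : TObj} (f : C ⟶ A) (g : C ⟶ B) : C ⟶ ProdObj A B where
  app := fun n x => (f.app n x, g.app n x)
  nat := fun n x => by
    show _ = (A.res n (f.app (n+1) x), B.res n (g.app (n+1) x))
    rw [f.nat, g.nat]

def canProd (A B : TObj) : LaterObj (ProdObj A B) ⟶ ProdObj (LaterObj A) (LaterObj B) :=
  pairT (LaterMap (proj1 A B)) (LaterMap (proj2 A B))

def ExpObj (X Y : TObj) : TObj where
  X := fun n => {f : ∀ k, k ≤ n → X.X k → Y.X k //
    ∀ k (h : k+1 ≤ n) (x : X.X (k+1)),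
      f k (Nat.le_of_succ_le h) (X.res k x) = Y.res k (f (k+1) h x)}
  res := fun n f =>
    ⟨fun k h => f.1 k (h.trans (Nat.le_succ n)),
     fun k h x => f.2 k (h.trans (Nat.le_succ n)) x⟩

def limE {X Y : TObj} (g : Delta PUnit ⟶ ExpObj X Y) :
    (Delta PUnit ⟶ X) → (Delta PUnit ⟶ Y) := fun x =>
  { app := fun n u => (g.app n u).1 n (le_refl n) (x.app n u)
    nat := fun n u => by
      have hg : g.app n u = (ExpObj X Y).res n (g.app (n+1) u) := g.nat n u
      have hx : x.app n u = X.res n (x.app (n+1) u) := x.nat n u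
      show (g.app n u).1 n (le_refl n) (x.app n u) =
        Y.res n ((g.app (n+1) u).1 (n+1) (le_refl (n+1)) (x.app (n+1) u))
      rw [hg, hx]
      exact (g.app (n+1) u).2 n (le_refl (n+1)) (x.app (n+1) u) }

/-!
Since `(▶A)ₙ₊₁ = Aₙ`, a fixed point is forced stage by stage: `a₀ = f₀(∗)` and
`aₙ₊₁ = fₙ₊₁(aₙ)`. Naturality of `f` makes these components compatible, and any fixed point
agrees with them by induction on the stage.
-/

section GuardedFix

variable {A : TObj}

theorem comp_nextT_app_succ {Z : Type} (x : Delta Z ⟶ A) (n : ℕ) (z : Z) :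
    (x ≫ nextT A).app (n+1) z = x.app n z :=
  (x.nat n z).symm

variable (f : LaterObj A ⟶ A)

def guardedFixApp : ∀ n, A.X n
  | 0 => f.app 0 PUnit.unit
  | n+1 => f.app (n+1) (guardedFixApp n)

theorem res_guardedFixApp (n : ℕ) : A.res n (guardedFixApp f (n+1)) = guardedFixApp f n := by
  induction n with
  | zero => exact (f.nat 0 _).symm
  | succ n ih =>
    calc A.res (n+1) (f.app (n+2) (guardedFixApp f (n+1)))
        = f.app (n+1) (A.res n (guardedFixApp f (n+1))) := (f.nat (n+1) _).symm
      _ = guardedFixApp f (n+1) := congrArg (f.app (n+1)) ih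

def guardedFix : Delta PUnit ⟶ A where
  app n _ := guardedFixApp f n
  nat n _ := (res_guardedFixApp f n).symm

theorem guardedFix_comp_nextT_comp : (guardedFix f ≫ nextT A) ≫ f = guardedFix f := by
  refine THom.ext (funext₂ fun n u => ?_)
  cases n with
  | zero => rfl
  | succ n => exact congrArg (f.app (n+1)) (comp_nextT_app_succ (guardedFix f) n u)

theorem eq_guardedFix_of_comp_nextT_comp {a : Delta PUnit ⟶ A}
    (ha : (a ≫ nextT A) ≫ f = a) : a = guardedFix f := by
  have ha_app : ∀ n u, f.app n ((a ≫ nextT A).app n u) = a.app n u := fun n u =>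
    congrFun (congrFun (congrArg THom.app ha) n) u
  refine THom.ext (funext₂ fun n u => ?_)
  induction n with
  | zero => exact (ha_app 0 u).symm
  | succ n ih =>
    rw [← ha_app (n+1) u]
    exact congrArg (f.app (n+1)) ((comp_nextT_app_succ a n u).trans (ih u))

end GuardedFix

/-- Every morphism `f : ▶A → A` in the topos of trees has a unique fixed point
among global elements: there is a unique `a : 1 ⟶ A` with `f ∘ next ∘ a = a`. -/
theorem unique_guarded_fixed_point (A : TObj) (f : LaterObj A ⟶ A) :
    ∃! a : Delta PUnit ⟶ A, (a ≫ nextT A) ≫ f = a :=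
  ⟨guardedFix f, guardedFix_comp_nextT_comp f, fun _ => eq_guardedFix_of_comp_nextT_comp f⟩
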